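/- arXiv:math/9504227 — 4 statements merged into one kernel-verified Lean document; each statement's English description precedes it below -/
import Mathlib

section
/- For every integer ℓ ≥ 2 and all real numbers t, y with 0 < t < y < 1, one has t·(y^(1/ℓ) − t^(1/ℓ)) / (t^(1/ℓ)·y·(1 − y^(1/ℓ))) ≤ (1 − 1/ℓ)^(ℓ−1) / (ℓ·(1 − y^(1/ℓ))). -/
/-!
Writing `t = u ^ ℓ` and `y = v ^ ℓ`, the inequality becomes
`ℓ · u^(ℓ-1) · (v - u) ≤ (1 - 1/ℓ)^(ℓ-1) · v^ℓ`. This is the AM-GM inequality for `ℓ - 1` copies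
of `u` and one copy of `(ℓ - 1)(v - u)`, whose arithmetic mean is `(1 - 1/ℓ) v`.
-/

theorem pow_mul_le_add_div_pow {a b : ℝ} (ha : 0 ≤ a) (hb : 0 ≤ b) (m : ℕ) :
    a ^ m * b ≤ ((m * a + b) / (m + 1)) ^ (m + 1) := by
  have amgm := Real.geom_mean_le_arith_mean2_weighted (w₁ := m / (m + 1)) (w₂ := 1 / (m + 1))
    (by positivity) (by positivity) ha hb (by field_simp)
  calc a ^ m * b = (a ^ (m / (m + 1) : ℝ) * b ^ (1 / (m + 1) : ℝ)) ^ (m + 1) := by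
        have hm : (m + 1 : ℝ) ≠ 0 := by positivity
        rw [mul_pow, ← Real.rpow_mul_natCast ha, ← Real.rpow_mul_natCast hb, Nat.cast_succ,
          div_mul_cancel₀ _ hm, one_div_mul_cancel hm, Real.rpow_natCast, Real.rpow_one]
    _ ≤ ((m * a + b) / (m + 1)) ^ (m + 1) := by
        gcongr
        exact amgm.trans_eq (by field_simp)

theorem natCast_mul_pow_mul_sub_le {n : ℕ} (hn : 2 ≤ n) {u v : ℝ} (hu : 0 ≤ u) (huv : u ≤ v) :
    n * u ^ (n - 1) * (v - u) ≤ (1 - 1 / n) ^ (n - 1) * v ^ n := by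
  obtain ⟨m, rfl⟩ : ∃ m, n = m + 1 := ⟨n - 1, by omega⟩
  have hm : (0 : ℝ) < m := by norm_cast; omega
  have amgm := pow_mul_le_add_div_pow hu (b := m * (v - u)) (by nlinarith) m
  rw [show (m * u + m * (v - u)) / (m + 1) = m / (m + 1) * v by ring, mul_pow] at amgm
  have hw : 1 - 1 / ((m + 1 : ℕ) : ℝ) = m / (m + 1) := by field_simp; push_cast; ring
  rw [hw, Nat.add_sub_cancel]
  push_cast
  calc (m + 1) * u ^ m * (v - u) = (m + 1) / m * (u ^ m * (m * (v - u))) := by field_simp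
    _ ≤ (m + 1) / m * ((m / (m + 1)) ^ (m + 1) * v ^ (m + 1)) := by gcongr
    _ = (m / (m + 1)) ^ m * v ^ (m + 1) := by rw [pow_succ]; field_simp

/-- For every integer ℓ ≥ 2 and all real numbers t, y with 0 < t < y < 1,
one has t·(y^(1/ℓ) − t^(1/ℓ)) / (t^(1/ℓ)·y·(1 − y^(1/ℓ)))
  ≤ (1 − 1/ℓ)^(ℓ−1) / (ℓ·(1 − y^(1/ℓ))). -/
theorem stmt0 (ℓ : ℕ) (hℓ : 2 ≤ ℓ) (t y : ℝ) (ht : 0 < t) (hty : t < y) (hy : y < 1) :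
    t * (y ^ ((1 : ℝ) / ℓ) - t ^ ((1 : ℝ) / ℓ)) /
        (t ^ ((1 : ℝ) / ℓ) * y * (1 - y ^ ((1 : ℝ) / ℓ)))
      ≤ (1 - 1 / (ℓ : ℝ)) ^ (ℓ - 1) / ((ℓ : ℝ) * (1 - y ^ ((1 : ℝ) / ℓ))) := by
  have hℓ0 : ℓ ≠ 0 := by omega
  have hroot (x : ℝ) (hx : 0 ≤ x) : (x ^ ℓ) ^ ((1 : ℝ) / ℓ) = x := by
    rw [one_div, Real.pow_rpow_inv_natCast hx hℓ0]
  have hy0 : 0 < y := ht.trans hty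
  obtain ⟨u, hu, rfl⟩ : ∃ u, 0 < u ∧ t = u ^ ℓ :=
    ⟨t ^ (ℓ⁻¹ : ℝ), by positivity, (Real.rpow_inv_natCast_pow ht.le hℓ0).symm⟩
  obtain ⟨v, hv, rfl⟩ : ∃ v, 0 < v ∧ y = v ^ ℓ :=
    ⟨y ^ (ℓ⁻¹ : ℝ), by positivity, (Real.rpow_inv_natCast_pow hy0.le hℓ0).symm⟩
  rw [pow_lt_pow_iff_left₀ hu.le hv.le hℓ0] at hty
  rw [pow_lt_one_iff_of_nonneg hv.le hℓ0] at hy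
  have hv1 : 0 < 1 - v := sub_pos.2 hy
  rw [hroot u hu.le, hroot v hv.le, div_le_div_iff₀ (by positivity) (by positivity),
    ← pow_sub_one_mul hℓ0]
  calc u ^ (ℓ - 1) * u * (v - u) * (ℓ * (1 - v))
      = ℓ * u ^ (ℓ - 1) * (v - u) * (u * (1 - v)) := by ring
    _ ≤ (1 - 1 / ℓ) ^ (ℓ - 1) * v ^ ℓ * (u * (1 - v)) :=
      mul_le_mul_of_nonneg_right (natCast_mul_pow_mul_sub_le hℓ hu.le hty.le) (by positivity)
    _ = (1 - 1 / ℓ) ^ (ℓ - 1) * (u * v ^ ℓ * (1 - v)) := by ring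
end

section
/- If 0 < y < exp(−1/e), then 1/(e·log(1/y)) < 1, and there exists an integer L ≥ 2 such that K*_ℓ(y) < 1 for every integer ℓ ≥ L. -/
open Filter Real Topology

/-- If 0 < y < exp(−1/e), then 1/(e·log(1/y)) < 1, and there exists an
integer L ≥ 2 such that K*_ℓ(y) = (1 − 1/ℓ)^(ℓ−1)/(ℓ·(1 − y^(1/ℓ))) < 1 for every ℓ ≥ L. -/
theorem stmt2 (y : ℝ) (hy0 : 0 < y) (hy1 : y < Real.exp (-(1 / Real.exp 1))) :
    1 / (Real.exp 1 * Real.log (1 / y)) < 1 ∧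
    ∃ L : ℕ, 2 ≤ L ∧ ∀ ℓ : ℕ, L ≤ ℓ →
      (1 - 1 / (ℓ : ℝ)) ^ (ℓ - 1) / ((ℓ : ℝ) * (1 - y ^ ((1 : ℝ) / ℓ))) < 1 := by
  have he : (0:ℝ) < Real.exp 1 := Real.exp_pos 1
  have hlogy : Real.log y < -(1 / Real.exp 1) := by
    have := Real.log_lt_log hy0 hy1
    rwa [Real.log_exp] at this
  set c := Real.log (1 / y) with hc
  have hcy : c = -Real.log y := by
    rw [hc, one_div, Real.log_inv]
  have hL0 : 1 / Real.exp 1 < c := by rw [hcy]; linarith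
  have hc0 : 0 < c := lt_trans (by positivity) hL0
  have h1 : 1 / (Real.exp 1 * c) < 1 := by
    rw [div_lt_one (by positivity)]
    calc (1:ℝ) = Real.exp 1 * (1 / Real.exp 1) := by field_simp
    _ < Real.exp 1 * c := by exact (mul_lt_mul_iff_right₀ he).mpr hL0
  refine ⟨h1, ?_⟩
  -- numerator limit
  have hA : Tendsto (fun n : ℕ => (1 + (-1) / (n:ℝ)) ^ n) atTop (𝓝 (Real.exp (-1))) :=
    Real.tendsto_one_add_div_pow_exp (-1)
  have hB : Tendsto (fun n : ℕ => (1 - 1 / (n:ℝ))) atTop (𝓝 1) := by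
    have : Tendsto (fun n : ℕ => 1 / (n:ℝ)) atTop (𝓝 0) :=
      tendsto_one_div_atTop_nhds_zero_nat
    have h := this.const_sub 1
    simpa using h
  have hnum : Tendsto (fun n : ℕ => (1 - 1 / (n:ℝ)) ^ (n - 1)) atTop
      (𝓝 (Real.exp (-1))) := by
    have hq : Tendsto (fun n : ℕ => (1 + (-1) / (n:ℝ)) ^ n / (1 - 1 / (n:ℝ))) atTop
        (𝓝 (Real.exp (-1) / 1)) := hA.div hB one_ne_zero
    rw [div_one] at hq
    apply hq.congr'
    filter_upwards [eventually_ge_atTop 2] with n hn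
    have hn0 : (0:ℝ) < (n:ℝ) := by positivity
    have hne : (1 : ℝ) - 1 / (n:ℝ) ≠ 0 := by
      have : 1 / (n:ℝ) ≤ 1 / 2 := by
        apply one_div_le_one_div_of_le <;> [norm_num; exact_mod_cast hn]
      intro h; rw [sub_eq_zero] at h; linarith
    have hb : (1 + (-1) / (n:ℝ)) = (1 - 1 / (n:ℝ)) := by ring
    rw [hb]
    calc (1 - 1 / (n:ℝ)) ^ n / (1 - 1 / (n:ℝ))
        = (1 - 1 / (n:ℝ)) ^ n / (1 - 1 / (n:ℝ)) ^ 1 := by rw [pow_one]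
      _ = (1 - 1 / (n:ℝ)) ^ (n - 1) := (pow_sub₀ _ hne (by omega)).symm
  -- denominator limit
  have hslope : Tendsto (fun t : ℝ => (Real.exp (-c * t) - 1) / t) (𝓝[≠] 0) (𝓝 (-c)) := by
    have hd : HasDerivAt (fun t : ℝ => Real.exp (-c * t)) (-c) 0 := by
      have := ((hasDerivAt_id (0:ℝ)).const_mul (-c)).exp
      simpa using this
    have := hasDerivAt_iff_tendsto_slope.mp hd
    apply this.congr
    intro t
    simp [slope_def_field]
  have hg : Tendsto (fun t : ℝ => (1 - Real.exp (-c * t)) / t) (𝓝[≠] 0) (𝓝 c) := by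
    have := hslope.neg
    rw [neg_neg] at this
    apply this.congr
    intro t; rw [← neg_div, neg_sub]
  have hinv : Tendsto (fun n : ℕ => 1 / (n:ℝ)) atTop (𝓝[≠] 0) := by
    apply tendsto_nhdsWithin_of_tendsto_nhds_of_eventually_within
    · exact tendsto_one_div_atTop_nhds_zero_nat
    · filter_upwards [eventually_ge_atTop 1] with n hn
      have : (0:ℝ) < (n:ℝ) := by exact_mod_cast Nat.pos_of_ne_zero (by omega)
      simp [Set.mem_compl_iff]
      positivity
  have hden : Tendsto (fun n : ℕ => (n:ℝ) * (1 - y ^ ((1:ℝ)/(n:ℝ)))) atTop (𝓝 c) := by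
    have hq := hg.comp hinv
    apply hq.congr'
    filter_upwards [eventually_ge_atTop 1] with n hn
    have hn0 : (0:ℝ) < (n:ℝ) := by exact_mod_cast Nat.pos_of_ne_zero (by omega)
    have hrpow : y ^ ((1:ℝ)/(n:ℝ)) = Real.exp (-c * (1 / (n:ℝ))) := by
      rw [Real.rpow_def_of_pos hy0, hcy, neg_neg]
    simp only [Function.comp]
    rw [hrpow]; field_simp
  have hdiv : Tendsto (fun n : ℕ =>
      (1 - 1 / (n:ℝ)) ^ (n - 1) / ((n:ℝ) * (1 - y ^ ((1:ℝ)/(n:ℝ))))) atTop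
      (𝓝 (Real.exp (-1) / c)) := hnum.div hden (ne_of_gt hc0)
  have hlt : Real.exp (-1) / c < 1 := by
    rw [div_lt_one hc0, Real.exp_neg, ← one_div]
    exact hL0
  have hev := hdiv.eventually_lt_const hlt
  rw [eventually_atTop] at hev
  obtain ⟨L, hL⟩ := hev
  exact ⟨max L 2, le_max_right _ _, fun ℓ hℓ => hL ℓ (le_trans (le_max_left _ _) hℓ)⟩
end

section
/- For all real numbers θ ∈ (0, π/2), α ∈ (0, π) and K ∈ ℝ, the equality 4·sin(α/2)·sin(θ + α/2) = (K+1)·sin α·sin θ holds if and only if tan(α/2) = ((K−1)/2)·tan θ. -/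
open Real

/-- For θ ∈ (0, π/2), α ∈ (0, π) and K ∈ ℝ,
4·sin(α/2)·sin(θ + α/2) = (K+1)·sin α·sin θ  ↔  tan(α/2) = ((K−1)/2)·tan θ. -/
theorem stmt16 (θ α K : ℝ) (hθ : θ ∈ Set.Ioo 0 (π / 2)) (hα : α ∈ Set.Ioo 0 π) :
    4 * Real.sin (α / 2) * Real.sin (θ + α / 2) = (K + 1) * Real.sin α * Real.sin θ ↔
    Real.tan (α / 2) = ((K - 1) / 2) * Real.tan θ := by
  obtain ⟨hθ0, hθ1⟩ := hθ
  obtain ⟨hα0, hα1⟩ := hα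
  have hpi := Real.pi_pos
  have hs : 0 < Real.sin (α / 2) :=
    Real.sin_pos_of_pos_of_lt_pi (by linarith) (by linarith)
  have hc : 0 < Real.cos (α / 2) :=
    Real.cos_pos_of_mem_Ioo ⟨by linarith, by linarith⟩
  have hst : 0 < Real.sin θ :=
    Real.sin_pos_of_pos_of_lt_pi hθ0 (by linarith)
  have hct : 0 < Real.cos θ :=
    Real.cos_pos_of_mem_Ioo ⟨by linarith, hθ1⟩
  have hsinα : Real.sin α = 2 * Real.sin (α / 2) * Real.cos (α / 2) := by
    have := Real.sin_two_mul (α / 2)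
    rw [show 2 * (α / 2) = α by ring] at this
    linarith
  rw [Real.tan_eq_sin_div_cos, Real.tan_eq_sin_div_cos, Real.sin_add, hsinα]
  rw [div_eq_iff hc.ne',
    show (K - 1) / 2 * (Real.sin θ / Real.cos θ) * Real.cos (α / 2) =
      (K - 1) * Real.sin θ * Real.cos (α / 2) / (Real.cos θ * 2) from by ring,
    eq_div_iff (by positivity : (Real.cos θ * 2) ≠ 0)]
  constructor
  · intro h
    have h2 : Real.sin (α / 2) * (Real.sin (α / 2) * Real.cos θ * 2) =
        Real.sin (α / 2) * ((K - 1) * Real.sin θ * Real.cos (α / 2)) := by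
      linear_combination h / 2
    have h3 := mul_left_cancel₀ hs.ne' h2
    linear_combination h3
  · intro h
    linear_combination 2 * Real.sin (α / 2) * h
end

section
/- Let α, β > 0 be real numbers such that α·(3 + α + β) ≥ (1+α)·(1+β) and β·(3 + α + β) ≥ (1+α)·(1+β). Then α ≥ (√5 − 1)/2 and β ≥ (√5 − 1)/2, and consequently (1+α)·(1+β)/(3 + α + β) ≥ (√5 − 1)/2 > 0.6. -/
/-- If α, β > 0 satisfy α·(3+α+β) ≥ (1+α)(1+β) and β·(3+α+β) ≥ (1+α)(1+β),
then α, β ≥ (√5 − 1)/2 and (1+α)(1+β)/(3+α+β) ≥ (√5 − 1)/2 > 0.6. -/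
theorem stmt17 (α β : ℝ) (hα : 0 < α) (hβ : 0 < β)
    (h1 : α * (3 + α + β) ≥ (1 + α) * (1 + β))
    (h2 : β * (3 + α + β) ≥ (1 + α) * (1 + β)) :
    α ≥ (Real.sqrt 5 - 1) / 2 ∧ β ≥ (Real.sqrt 5 - 1) / 2 ∧
    (1 + α) * (1 + β) / (3 + α + β) ≥ (Real.sqrt 5 - 1) / 2 ∧
    (Real.sqrt 5 - 1) / 2 > 0.6 := by
  have hs : Real.sqrt 5 ^ 2 = 5 := Real.sq_sqrt (by norm_num)
  have hsn : Real.sqrt 5 ≥ 0 := Real.sqrt_nonneg 5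
  set κ := (Real.sqrt 5 - 1) / 2 with hκdef
  have hκ : κ ^ 2 + κ = 1 := by rw [hκdef]; nlinarith
  have hκ6 : κ > 0.6 := by
    have : Real.sqrt 5 > 2.2 := by nlinarith
    rw [hκdef]; linarith
  have hακ : α ≥ κ := by
    rcases le_total α β with hab | hab
    · nlinarith [sq_nonneg (α - κ)]
    · nlinarith [sq_nonneg (α - κ)]
  have hβκ : β ≥ κ := by
    rcases le_total α β with hab | hab
    · nlinarith [sq_nonneg (β - κ)]
    · nlinarith [sq_nonneg (β - κ)]
  refine ⟨hακ, hβκ, ?_, hκ6⟩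
  rw [ge_iff_le, le_div_iff₀ (by linarith)]
  nlinarith [mul_nonneg (sub_nonneg.2 hακ) (sub_nonneg.2 hβκ)]
end
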